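/- Let m, n ≥ 2 and let G be a graph obtained from the complete bipartite graph K_{m,n} (with parts {a₁, …, a_m} and {b₁, …, b_n}) by attaching a nonempty set of new end vertices, each adjacent to exactly one vertex of the K_{m,n}. Then there is no Boolean semigroup S (commutative semigroup with zero in which x·x = x for all x) such that Γ(S) is isomorphic to G. -/

import Mathlib

universe u v w
/-- A commutative semigroup with a zero element `0` satisfying `0 * a = 0`. -/
class CommSemigroupWithZero (S : Type u) extends CommSemigroup S, Zero S where
  zero_mul' : ∀ a : S, 0 * a = 0

/-- The zero-divisor graph of `S`, as a simple graph on all of `S`: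
distinct nonzero `x, y` are adjacent iff `x * y = 0`.  (The element `0` and the
non-zero-divisors are isolated vertices, so adjacency, end vertices and cycles
are exactly those of `Γ(S)`.) -/
def zdGraph (S : Type u) [CommSemigroupWithZero S] : SimpleGraph S where
  Adj x y := x ≠ y ∧ x * y = 0 ∧ x ≠ 0 ∧ y ≠ 0
  symm := by
    constructor
    rintro x y ⟨h1, h2, h3, h4⟩
    exact ⟨h1.symm, by rwa [mul_comm], h4, h3⟩
  loopless := ⟨fun x h => h.1 rfl⟩

/-- `x` is a vertex of `Γ(S)`: a nonzero zero-divisor. -/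
def IsVertex (S : Type u) [CommSemigroupWithZero S] (x : S) : Prop :=
  x ≠ 0 ∧ ∃ y : S, y ≠ 0 ∧ x * y = 0

/-- `x` is an end vertex of `Γ(S)`: it has exactly one neighbour. -/
def IsEndVertex (S : Type u) [CommSemigroupWithZero S] (x : S) : Prop :=
  ∃! y : S, (zdGraph S).Adj x y
/-- The zero-divisor graph of `S` on its vertex set (the nonzero zero-divisors). -/
def zdvGraph (S : Type u) [CommSemigroupWithZero S] :
    SimpleGraph {x : S // x ≠ 0 ∧ ∃ y : S, y ≠ 0 ∧ x * y = 0} where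
  Adj a b := a ≠ b ∧ (a : S) * (b : S) = 0
  symm := by
    constructor
    rintro a b ⟨h1, h2⟩
    exact ⟨h1.symm, by rwa [mul_comm]⟩
  loopless := ⟨fun a h => h.1 rfl⟩

/-- `G` is (isomorphic to) the zero-divisor graph of some commutative semigroup with zero. -/
def IsZDGraphOf {α : Type v} (G : SimpleGraph α) : Prop :=
  ∃ (S : Type u) (inst : CommSemigroupWithZero S), Nonempty ((@zdvGraph S inst) ≃g G)

/-- The graph obtained from the complete bipartite graph `K_{m,n}` (with parts `Fin m`
and `Fin n`) by attaching, to each core vertex `c`, a set `E c` of new end vertices,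
each adjacent exactly to `c`. -/
def KmnE (m n : ℕ) (E : Fin m ⊕ Fin n → Type u) :
    SimpleGraph ((Fin m ⊕ Fin n) ⊕ (Σ c, E c)) where
  Adj x y :=
    match x, y with
    | Sum.inl (Sum.inl _), Sum.inl (Sum.inr _) => True
    | Sum.inl (Sum.inr _), Sum.inl (Sum.inl _) => True
    | Sum.inl (Sum.inl _), Sum.inl (Sum.inl _) => False
    | Sum.inl (Sum.inr _), Sum.inl (Sum.inr _) => False
    | Sum.inl c, Sum.inr p => c = p.1
    | Sum.inr p, Sum.inl c => c = p.1
    | Sum.inr _, Sum.inr _ => False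
  symm := by
    constructor
    rintro ((i | i) | p) ((j | j) | q) h
    · exact h
    · exact trivial
    · exact h
    · exact trivial
    · exact h
    · exact h
    · exact h
    · exact h
    · exact h.elim
  loopless := by
    constructor
    rintro ((i | i) | p) h
    · exact h
    · exact h
    · exact h

/-!
In a Boolean semigroup, for non-adjacent vertices `x, y` of `Γ(S)` the product `x * y` is nonzero,
annihilates every neighbour of `x` and of `y`, and (being idempotent) differs from each of them,
so it is a vertex adjacent to all of `N(x) ∪ N(y)`. In `K_{m,n}` with an end vertex `e` at `c`,
take `y ≠ c` in the part of `c`: then `N(e) ∪ N(y)` contains `c` and the whole other part, and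
no vertex is adjacent to all of these.
-/

namespace SimpleGraph

variable {V W : Type*}

def NonadjNeighborsDominated (G : SimpleGraph V) : Prop :=
  ∀ x y, ¬ G.Adj x y → ∃ w, ∀ z, G.Adj x z ∨ G.Adj y z → G.Adj w z

theorem NonadjNeighborsDominated.map {G : SimpleGraph V} {H : SimpleGraph W} (φ : G ≃g H)
    (hG : G.NonadjNeighborsDominated) : H.NonadjNeighborsDominated := by
  intro x y hxy
  obtain ⟨w, hw⟩ := hG (φ.symm x) (φ.symm y) (by rwa [φ.symm.map_adj_iff])
  refine ⟨φ w, fun z hz => ?_⟩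
  rw [← φ.symm.map_adj_iff, φ.symm_apply_apply]
  exact hw _ (by simpa only [φ.symm.map_adj_iff] using hz)

end SimpleGraph

theorem zdvGraph_nonadjNeighborsDominated {S : Type u} [CommSemigroupWithZero S]
    (hB : ∀ x : S, x * x = x) : (zdvGraph S).NonadjNeighborsDominated := by
  rintro x y hxy
  have ne_of_mul_self_ne_zero : ∀ a b : S, a ≠ 0 → a * b = 0 → a ≠ b := fun a b ha hab h => by
    rw [h, hB] at hab
    exact ha (h.trans hab)
  have hxy0 : (x : S) * y ≠ 0 := fun h0 =>
    hxy ⟨fun h => ne_of_mul_self_ne_zero x x x.2.1 (h ▸ h0) rfl, h0⟩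
  have hann : ∀ z : S, (x : S) * z = 0 ∨ (y : S) * z = 0 → (x : S) * y * z = 0 := by
    rintro z (hz | hz)
    · rw [mul_right_comm, hz, CommSemigroupWithZero.zero_mul']
    · rw [mul_assoc, hz, mul_comm, CommSemigroupWithZero.zero_mul']
  obtain ⟨t, ht, hxt⟩ := x.2.2
  refine ⟨⟨x * y, hxy0, t, ht, hann t (Or.inl hxt)⟩, fun z hz => ?_⟩
  have hz0 := hann z (hz.imp And.right And.right)
  exact ⟨fun h => ne_of_mul_self_ne_zero _ _ hxy0 hz0 (congrArg Subtype.val h), hz0⟩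

section KmnE

variable {m n : ℕ} {E : Fin m ⊕ Fin n → Type u}

@[simp]
theorem KmnE_adj_inl_inl {c d : Fin m ⊕ Fin n} :
    (KmnE m n E).Adj (Sum.inl c) (Sum.inl d) ↔ c.isLeft ≠ d.isLeft := by
  rcases c with c | c <;> rcases d with d | d <;> simp [KmnE]

@[simp]
theorem KmnE_adj_inr_inl {p : Σ c, E c} {c : Fin m ⊕ Fin n} :
    (KmnE m n E).Adj (Sum.inr p) (Sum.inl c) ↔ c = p.1 := Iff.rfl

@[simp]
theorem KmnE_adj_inl_inr {p : Σ c, E c} {c : Fin m ⊕ Fin n} :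
    (KmnE m n E).Adj (Sum.inl c) (Sum.inr p) ↔ c = p.1 := by
  rcases c with c | c <;> rfl

theorem exists_ne_isLeft_eq_and_isLeft_ne (hm : 2 ≤ m) (hn : 2 ≤ n) (c : Fin m ⊕ Fin n) :
    (∃ c', c' ≠ c ∧ c'.isLeft = c.isLeft) ∧ ∃ d : Fin m ⊕ Fin n, d.isLeft ≠ c.isLeft := by
  have : Nontrivial (Fin m) := Fin.nontrivial_iff_two_le.mpr hm
  have : Nontrivial (Fin n) := Fin.nontrivial_iff_two_le.mpr hn
  rcases c with i | j
  · obtain ⟨i', hi'⟩ := exists_ne i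
    exact ⟨⟨.inl i', by simpa using hi', rfl⟩, .inr ⟨0, by omega⟩, by simp⟩
  · obtain ⟨j', hj'⟩ := exists_ne j
    exact ⟨⟨.inr j', by simpa using hj', rfl⟩, .inl ⟨0, by omega⟩, by simp⟩

theorem KmnE_not_nonadjNeighborsDominated (hm : 2 ≤ m) (hn : 2 ≤ n)
    (hE : ∃ c, Nonempty (E c)) : ¬ (KmnE m n E).NonadjNeighborsDominated := by
  intro hdom
  obtain ⟨c, ⟨e⟩⟩ := hE
  obtain ⟨⟨c', hc'c, hc'⟩, d, hd⟩ := exists_ne_isLeft_eq_and_isLeft_ne hm hn c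
  obtain ⟨w, hw⟩ := hdom (.inr ⟨c, e⟩) (.inl c') (by simpa using hc'c)
  have hwc := hw (.inl c) (.inl (by simp))
  have hwd := hw (.inl d) (.inr (by simpa [hc'] using hd.symm))
  have hyw : ¬ (KmnE m n E).Adj (.inl c') w := fun h => (KmnE m n E).irrefl (hw w (.inr h))
  rcases w with v | q
  · simp only [KmnE_adj_inl_inl, hc'] at hwc hyw
    exact hyw hwc.symm
  · simp only [KmnE_adj_inr_inl] at hwc hwd
    exact hd (by rw [hwc, hwd])

end KmnE

/-- Corollary 3.5(2): the complete bipartite graph `K_{m,n}` (`m, n ≥ 2`) together with a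
nonempty set of attached end vertices is not the zero-divisor graph of any Boolean
semigroup. -/
theorem stmt16 (m n : ℕ) (hm : 2 ≤ m) (hn : 2 ≤ n) (E : Fin m ⊕ Fin n → Type u)
    (hE : ∃ c, Nonempty (E c)) :
    ¬ ∃ (S : Type u) (inst : CommSemigroupWithZero S),
        (∀ x : S, x * x = x) ∧ Nonempty ((@zdvGraph S inst) ≃g KmnE m n E) := by
  rintro ⟨S, inst, hB, ⟨φ⟩⟩
  exact KmnE_not_nonadjNeighborsDominated hm hn hE
    ((zdvGraph_nonadjNeighborsDominated hB).map φ)
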